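/- arXiv:1611.08244 — 2 statements merged into one kernel-verified Lean document; each statement's English description precedes it below -/
import Mathlib

section
/- The limit as n → ∞ of B(n)/n equals 2/3. -/
/-- The auxiliary sequence: `a 1 = 3`, `a i = 3 * a (i-1) - 1` for `i ≥ 2`. -/
def a : ℕ → ℕ
  | 0 => 0
  | 1 => 3
  | n + 2 => 3 * a (n + 1) - 1

/-- `R(m, i) = max(0, ⌊(m − a i − 1)/3^i⌋)` (truncated ℕ-subtraction gives the max). -/
def Rmi (m i : ℕ) : ℕ := (m - a i - 1) / 3 ^ i

/-- `R(m) = ∑_{i=1}^∞ R(m, i)`; all terms with `i > m` vanish, so a finite sum suffices. -/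
def R (m : ℕ) : ℕ := ∑ i ∈ Finset.Icc 1 m, Rmi m i

/-- `m` has a witness pair `(k, i)` of positive integers with `m = k·3^i + a i`. -/
def HasWitness (m : ℕ) : Prop := ∃ k i : ℕ, 1 ≤ k ∧ 1 ≤ i ∧ m = k * 3 ^ i + a i

/-- `B` is the `B`-sequence: `B 0 = 0`, `B n = n` for `1 ≤ n ≤ 5`, and
`B n = B (n - B (n-1)) + B (n - B (n-2)) + B (n - B (n-3))` for `n ≥ 6`. -/
def IsBSeq (B : ℕ → ℕ) : Prop :=
  B 0 = 0 ∧ (∀ n, 1 ≤ n → n ≤ 5 → B n = n) ∧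
    ∀ n, 6 ≤ n → B n = B (n - B (n - 1)) + B (n - B (n - 2)) + B (n - B (n - 3))

/-
Put `firstIdx v = v + R v`. The B-sequence is the upper adjoint of `firstIdx`: `B n` is the
largest `v` with `firstIdx v ≤ n`, so `B` takes each value `v` exactly
`firstIdx (v + 1) - firstIdx v ∈ {1, 2}` times. The self-similarity
`R m = (m - 4) / 3 + R (m / 3 + 1)` expresses `firstIdx` at `3u + 1, 3u + 2, 3u + 3` through
`firstIdx (u + 1)` and `firstIdx (u + 2)`. When `B n` is one of these three values, each
`n - B (n - j)` lies within one of `firstIdx (u + 1)`, so every term of the recursion can be read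
off; by uniqueness, `B` is this upper adjoint. The same self-similarity gives
`m - 2 R m = O(log m)`, hence `firstIdx v = 3v/2 + O(log v)` and `B n / n → 2/3`.
-/

open Real Filter Topology

theorem a_succ {i : ℕ} (hi : i ≠ 0) : a (i + 1) = 3 * a i - 1 := by
  obtain ⟨j, rfl⟩ := Nat.exists_eq_succ_of_ne_zero hi
  rfl

theorem lt_a {i : ℕ} (hi : i ≠ 0) : i < a i := by
  induction i with
  | zero => contradiction
  | succ j ih =>
    rcases Nat.eq_zero_or_pos j with rfl | hj
    · decide
    · rw [a_succ (by omega)]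
      have := ih (by omega)
      omega

theorem Rmi_eq_zero_of_lt {m i : ℕ} (h : m < i) : Rmi m i = 0 := by
  have := lt_a (i := i) (by omega)
  simp [Rmi, show m - a i - 1 = 0 by omega]

theorem Rmi_succ (m : ℕ) {i : ℕ} (hi : i ≠ 0) : Rmi m (i + 1) = Rmi (m / 3 + 1) i := by
  have := lt_a hi
  rw [Rmi, Rmi, a_succ hi, pow_succ', ← Nat.div_div_eq_div_mul]
  congr 1
  omega

theorem R_eq_sum_Icc {m k : ℕ} (h : m ≤ k) : R m = ∑ i ∈ Finset.Icc 1 k, Rmi m i :=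
  Finset.sum_subset (Finset.Icc_subset_Icc_right h) fun i hik him => by
    simp only [Finset.mem_Icc] at hik him
    exact Rmi_eq_zero_of_lt (by omega)

theorem R_eq_sub_four_div_three_add (m : ℕ) : R m = (m - 4) / 3 + R (m / 3 + 1) := by
  rcases Nat.lt_or_ge m 3 with hm | hm
  · interval_cases m <;> decide
  have hsplit : R m = Rmi m 1 + ∑ i ∈ Finset.Icc 1 (m - 1), Rmi m (i + 1) := by
    have hshift : Finset.Ioc 1 m = (Finset.Icc 1 (m - 1)).map (addRightEmbedding 1) := by
      rw [Finset.map_add_right_Icc, Nat.sub_add_cancel (by omega), Finset.Icc_add_one_left_eq_Ioc]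
    rw [R, Finset.Icc_eq_cons_Ioc (by omega), Finset.sum_cons, hshift, Finset.sum_map]
    rfl
  have hfirst : Rmi m 1 = (m - 4) / 3 := by
    rw [Rmi, pow_one, Nat.sub_sub]
    rfl
  rw [hsplit, hfirst, R_eq_sum_Icc (k := m - 1) (by omega)]
  exact congrArg _ (Finset.sum_congr rfl fun i hi => Rmi_succ m
    (Nat.one_le_iff_ne_zero.1 (Finset.mem_Icc.1 hi).1))

theorem R_mono : Monotone R := fun x y hxy => by
  rw [R_eq_sum_Icc (le_refl y), R_eq_sum_Icc hxy]
  exact Finset.sum_le_sum fun i _ => Nat.div_le_div_right (by omega)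

theorem R_succ_le (m : ℕ) : R (m + 1) ≤ R m + 1 := by
  induction m using Nat.strong_induction_on with
  | _ m ih =>
    rcases Nat.lt_or_ge m 2 with hm | hm
    · interval_cases m <;> decide
    rw [R_eq_sub_four_div_three_add m, R_eq_sub_four_div_three_add (m + 1)]
    have := ih (m / 3 + 1) (by omega)
    rcases (show (m + 1) / 3 = m / 3 ∨ (m + 1) / 3 = m / 3 + 1 ∧ (m + 1 - 4) / 3 = (m - 4) / 3
      by omega) with h | ⟨h, h'⟩
    · rw [h]; omega
    · rw [h, h']; omega

theorem two_mul_R_le (m : ℕ) : 2 * R m ≤ m := by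
  induction m using Nat.strong_induction_on with
  | _ m ih =>
    rcases Nat.lt_or_ge m 2 with hm | hm
    · interval_cases m <;> decide
    rw [R_eq_sub_four_div_three_add m]
    have := ih (m / 3 + 1) (by omega)
    omega

def firstIdx (v : ℕ) : ℕ := v + R v

theorem le_firstIdx (v : ℕ) : v ≤ firstIdx v := Nat.le_add_right _ _

theorem firstIdx_strictMono : StrictMono firstIdx :=
  strictMono_nat_of_lt_succ fun v => by
    have := R_mono (Nat.le_add_right v 1)
    unfold firstIdx
    omega

theorem firstIdx_succ_le (v : ℕ) : firstIdx (v + 1) ≤ firstIdx v + 2 := by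
  have := R_succ_le v
  unfold firstIdx
  omega

theorem firstIdx_add_eq_of_div_three_add_one {v u : ℕ} (h : v / 3 + 1 = u) :
    firstIdx v + u = firstIdx u + v + (v - 4) / 3 := by
  have := R_eq_sub_four_div_three_add v
  subst h
  unfold firstIdx
  omega

def bSeq (n : ℕ) : ℕ := Nat.findGreatest (fun v => firstIdx v ≤ n) n

theorem firstIdx_bSeq_le (n : ℕ) : firstIdx (bSeq n) ≤ n :=
  Nat.findGreatest_spec (P := fun v => firstIdx v ≤ n) (Nat.zero_le n)
    ((show firstIdx 0 = 0 by decide).trans_le (Nat.zero_le n))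

theorem gc_firstIdx_bSeq : GaloisConnection firstIdx bSeq := fun v n =>
  ⟨fun h => Nat.le_findGreatest ((le_firstIdx v).trans h) h,
    fun h => (firstIdx_strictMono.monotone h).trans (firstIdx_bSeq_le n)⟩

theorem lt_firstIdx_bSeq_succ (n : ℕ) : n < firstIdx (bSeq n + 1) :=
  lt_of_not_ge fun h => (bSeq n).lt_succ_self.not_ge ((gc_firstIdx_bSeq _ _).1 h)

theorem bSeq_eq_of_le_of_lt {n v : ℕ} (h₁ : firstIdx v ≤ n) (h₂ : n < firstIdx (v + 1)) :
    bSeq n = v :=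
  le_antisymm (Nat.le_of_lt_succ (lt_of_not_ge fun h => h₂.not_ge ((gc_firstIdx_bSeq _ _).2 h)))
    ((gc_firstIdx_bSeq _ _).1 h₁)

theorem one_le_bSeq {n : ℕ} (hn : 1 ≤ n) : 1 ≤ bSeq n :=
  (gc_firstIdx_bSeq 1 n).1 (by rwa [show firstIdx 1 = 1 by decide])

theorem firstIdx_superblock (k : ℕ) :
    firstIdx (3 * k + 5) = firstIdx (k + 2) + 3 * k + 3 ∧
    firstIdx (3 * k + 6) = firstIdx (k + 3) + 3 * k + 3 ∧
    firstIdx (3 * k + 7) = firstIdx (k + 3) + 3 * k + 5 ∧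
    firstIdx (3 * k + 8) = firstIdx (k + 3) + 3 * k + 6 ∧
    firstIdx (3 * k + 9) = firstIdx (k + 4) + 3 * k + 6 ∧
    firstIdx (3 * k + 10) = firstIdx (k + 4) + 3 * k + 8 := by
  have h5 := firstIdx_add_eq_of_div_three_add_one (v := 3 * k + 5) (u := k + 2) (by omega)
  have h6 := firstIdx_add_eq_of_div_three_add_one (v := 3 * k + 6) (u := k + 3) (by omega)
  have h7 := firstIdx_add_eq_of_div_three_add_one (v := 3 * k + 7) (u := k + 3) (by omega)
  have h8 := firstIdx_add_eq_of_div_three_add_one (v := 3 * k + 8) (u := k + 3) (by omega)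
  have h9 := firstIdx_add_eq_of_div_three_add_one (v := 3 * k + 9) (u := k + 4) (by omega)
  have h10 := firstIdx_add_eq_of_div_three_add_one (v := 3 * k + 10) (u := k + 4) (by omega)
  omega

theorem bSeq_rec_of_superblock {k n : ℕ} (hlo : firstIdx (3 * k + 7) ≤ n)
    (hhi : n < firstIdx (3 * k + 10)) :
    bSeq n = bSeq (n - bSeq (n - 1)) + bSeq (n - bSeq (n - 2)) + bSeq (n - bSeq (n - 3)) := by
  have := firstIdx_superblock k
  have := firstIdx_strictMono (show k + 2 < k + 3 by omega)
  have := firstIdx_strictMono (show k + 3 < k + 4 by omega)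
  have := firstIdx_strictMono (show k + 4 < k + 5 by omega)
  have : firstIdx (k + 4) ≤ firstIdx (k + 3) + 2 := firstIdx_succ_le (k + 3)
  set X := firstIdx (k + 3)
  -- `w` is kept apart from `v + 1` so that `omega` sees `firstIdx w` as an atom it already knows.
  have hC : ∀ x v w, w = v + 1 → firstIdx v ≤ x ∧ x < firstIdx w → bSeq x = v := by
    rintro x v _ rfl h
    exact bSeq_eq_of_le_of_lt h.1 h.2
  rcases (show n = X + 3 * k + 5 ∨ n = X + 3 * k + 6 ∨
      (firstIdx (k + 4) = X + 1 ∧ (n = X + 3 * k + 7 ∨ n = X + 3 * k + 8)) ∨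
      (firstIdx (k + 4) = X + 2 ∧ (n = X + 3 * k + 7 ∨ n = X + 3 * k + 8 ∨ n = X + 3 * k + 9))
      by omega) with hn | hn | ⟨hgap, hn | hn⟩ | ⟨hgap, hn | hn | hn⟩
  · rw [hC n (3*k+7) (3*k+8) rfl (by omega), hC (n-1) (3*k+6) (3*k+7) rfl (by omega),
      hC (n-2) (3*k+6) (3*k+7) rfl (by omega), hC (n-3) (3*k+5) (3*k+6) rfl (by omega),
      hC (n-(3*k+6)) (k+2) (k+3) rfl (by omega), hC (n-(3*k+5)) (k+3) (k+4) rfl (by omega)]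
    omega
  · rw [hC n (3*k+8) (3*k+9) rfl (by omega), hC (n-1) (3*k+7) (3*k+8) rfl (by omega),
      hC (n-2) (3*k+6) (3*k+7) rfl (by omega), hC (n-3) (3*k+6) (3*k+7) rfl (by omega),
      hC (n-(3*k+7)) (k+2) (k+3) rfl (by omega), hC (n-(3*k+6)) (k+3) (k+4) rfl (by omega)]
    omega
  · rw [hC n (3*k+9) (3*k+10) rfl (by omega), hC (n-1) (3*k+8) (3*k+9) rfl (by omega),
      hC (n-2) (3*k+7) (3*k+8) rfl (by omega), hC (n-3) (3*k+6) (3*k+7) rfl (by omega),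
      hC (n-(3*k+8)) (k+2) (k+3) rfl (by omega), hC (n-(3*k+7)) (k+3) (k+4) rfl (by omega),
      hC (n-(3*k+6)) (k+4) (k+5) rfl (by omega)]
    omega
  · rw [hC n (3*k+9) (3*k+10) rfl (by omega), hC (n-1) (3*k+9) (3*k+10) rfl (by omega),
      hC (n-2) (3*k+8) (3*k+9) rfl (by omega), hC (n-3) (3*k+7) (3*k+8) rfl (by omega),
      hC (n-(3*k+9)) (k+2) (k+3) rfl (by omega), hC (n-(3*k+8)) (k+3) (k+4) rfl (by omega),
      hC (n-(3*k+7)) (k+4) (k+5) rfl (by omega)]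
    omega
  · rw [hC n (3*k+8) (3*k+9) rfl (by omega), hC (n-1) (3*k+8) (3*k+9) rfl (by omega),
      hC (n-2) (3*k+7) (3*k+8) rfl (by omega), hC (n-3) (3*k+6) (3*k+7) rfl (by omega),
      hC (n-(3*k+8)) (k+2) (k+3) rfl (by omega), hC (n-(3*k+7)) (k+3) (k+4) rfl (by omega),
      hC (n-(3*k+6)) (k+3) (k+4) rfl (by omega)]
    omega
  · rw [hC n (3*k+9) (3*k+10) rfl (by omega), hC (n-1) (3*k+8) (3*k+9) rfl (by omega),
      hC (n-2) (3*k+8) (3*k+9) rfl (by omega), hC (n-3) (3*k+7) (3*k+8) rfl (by omega),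
      hC (n-(3*k+8)) (k+3) (k+4) rfl (by omega), hC (n-(3*k+7)) (k+3) (k+4) rfl (by omega)]
    omega
  · rw [hC n (3*k+9) (3*k+10) rfl (by omega), hC (n-1) (3*k+9) (3*k+10) rfl (by omega),
      hC (n-2) (3*k+8) (3*k+9) rfl (by omega), hC (n-3) (3*k+8) (3*k+9) rfl (by omega),
      hC (n-(3*k+9)) (k+3) (k+4) rfl (by omega), hC (n-(3*k+8)) (k+3) (k+4) rfl (by omega)]
    omega

theorem isBSeq_bSeq : IsBSeq bSeq := by
  refine ⟨by decide, fun n hn₁ hn₅ => ?_, fun n hn => ?_⟩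
  · interval_cases n <;> decide
  rcases (show n = 6 ∨ n = 7 ∨ 8 ≤ n by omega) with rfl | rfl | hn
  · decide
  · decide
  have h₇ : 7 ≤ bSeq n := (gc_firstIdx_bSeq 7 n).1 ((show firstIdx 7 = 8 by decide).trans_le hn)
  exact bSeq_rec_of_superblock (k := (bSeq n - 7) / 3)
    ((firstIdx_strictMono.monotone (by omega)).trans (firstIdx_bSeq_le n))
    ((lt_firstIdx_bSeq_succ n).trans_le (firstIdx_strictMono.monotone (by omega)))

theorem IsBSeq.eq {B B' : ℕ → ℕ} (hB : IsBSeq B) (hB' : IsBSeq B')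
    (hpos : ∀ n, 1 ≤ n → 1 ≤ B' n) : B = B' := by
  funext n
  induction n using Nat.strong_induction_on with
  | _ n ih =>
    rcases Nat.lt_or_ge n 6 with hn | hn
    · rcases Nat.eq_zero_or_pos n with rfl | hn₀
      · rw [hB.1, hB'.1]
      · rw [hB.2.1 n hn₀ (by omega), hB'.2.1 n hn₀ (by omega)]
    have hterm : ∀ j, 1 ≤ j → j ≤ 3 → B (n - B (n - j)) = B' (n - B' (n - j)) := by
      intro j hj₁ hj₃
      have := hpos (n - j) (by omega)
      rw [ih (n - j) (by omega)]
      exact ih _ (by omega)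
    rw [hB.2.2 n hn, hB'.2.2 n hn, hterm 1 le_rfl (by omega), hterm 2 (by omega) (by omega),
      hterm 3 (by omega) le_rfl]

-- From `m / 3 + 1` to `m` the defect `m - 2 R m` grows by at most `4`, and `6 log 2 > 4`.
theorem sub_two_mul_R_le_log (m : ℕ) : (m : ℝ) - 2 * R m ≤ 6 * log m + 3 := by
  induction m using Nat.strong_induction_on with
  | _ m ih =>
    rcases Nat.lt_or_ge m 4 with hm | hm
    · have : (m : ℝ) ≤ 3 := by exact_mod_cast (show m ≤ 3 by omega)
      have : (0 : ℝ) ≤ R m := by positivity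
      linarith [log_natCast_nonneg m]
    set m' := m / 3 + 1
    have hrec : (R m : ℝ) = ((m - 4) / 3 : ℕ) + R m' := by
      exact_mod_cast R_eq_sub_four_div_three_add m
    have hquot : (m : ℝ) ≤ 3 * ((m - 4) / 3 : ℕ) + 6 := by
      exact_mod_cast (show m ≤ 3 * ((m - 4) / 3) + 6 by omega)
    have hm' : (m : ℝ) + 1 ≤ 3 * m' := by exact_mod_cast (show m + 1 ≤ 3 * m' by omega)
    have hlog : log m' + log 2 ≤ log m := by
      rw [← log_mul (by positivity) (by norm_num)]
      exact log_le_log (by positivity) (by exact_mod_cast (show m' * 2 ≤ m by omega))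
    have := ih m' (by omega)
    have := log_two_gt_d9
    linarith

theorem two_mul_le_three_mul_bSeq_add_one (n : ℕ) : 2 * n ≤ 3 * bSeq n + 1 := by
  have h₁ := lt_firstIdx_bSeq_succ n
  have h₂ := two_mul_R_le (bSeq n + 1)
  unfold firstIdx at h₁
  omega

theorem three_mul_bSeq_le (n : ℕ) : 3 * (bSeq n : ℝ) ≤ 2 * n + 6 * log n + 3 := by
  have hfirst : (bSeq n : ℝ) + R (bSeq n) ≤ n := by exact_mod_cast firstIdx_bSeq_le n
  have hdefect := sub_two_mul_R_le_log (bSeq n)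
  have hlog : log (bSeq n) ≤ log n := by
    rcases Nat.eq_zero_or_pos (bSeq n) with h | h
    · rw [h, Nat.cast_zero, log_zero]
      exact log_natCast_nonneg n
    · exact log_le_log (by positivity)
        (by exact_mod_cast (le_firstIdx _).trans (firstIdx_bSeq_le n))
  linarith

theorem abs_bSeq_div_sub_le {n : ℕ} (hn : 1 ≤ n) :
    |(bSeq n : ℝ) / n - 2 / 3| ≤ (2 * log n + 1) / n := by
  have hn' : (0 : ℝ) < n := by exact_mod_cast hn
  have hlower : (2 * n : ℝ) ≤ 3 * bSeq n + 1 := by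
    exact_mod_cast two_mul_le_three_mul_bSeq_add_one n
  have hupper := three_mul_bSeq_le n
  have hlog := log_natCast_nonneg n
  have hdiff : (bSeq n : ℝ) / n - 2 / 3 = (3 * bSeq n - 2 * n) / (3 * n) := by field_simp
  have habs : |3 * (bSeq n : ℝ) - 2 * n| ≤ 6 * log n + 3 :=
    abs_le.2 ⟨by linarith, by linarith⟩
  rw [hdiff, abs_div, abs_of_pos (by linarith : (0 : ℝ) < 3 * n),
    div_le_div_iff₀ (by linarith) hn']
  nlinarith

theorem tendsto_bSeq_div : Tendsto (fun n : ℕ => (bSeq n : ℝ) / n) atTop (𝓝 (2 / 3)) := by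
  have herr : Tendsto (fun x : ℝ => (2 * log x + 1) / x) atTop (𝓝 0) := by
    have h := ((tendsto_pow_log_div_mul_add_atTop 1 0 1 one_ne_zero).const_mul 2).add
      tendsto_inv_atTop_zero
    rw [mul_zero, zero_add] at h
    refine h.congr fun x => ?_
    simp only [pow_one, one_mul, add_zero]
    ring
  rw [tendsto_iff_norm_sub_tendsto_zero]
  refine squeeze_zero' (Eventually.of_forall fun n => norm_nonneg _) ?_
    (herr.comp tendsto_natCast_atTop_atTop)
  filter_upwards [eventually_ge_atTop 1] with n hn
  exact (Real.norm_eq_abs _).trans_le (abs_bSeq_div_sub_le hn)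

/-- `B n / n → 2/3` as `n → ∞`. -/
theorem stmt_8 (B : ℕ → ℕ) (hB : IsBSeq B) :
    Filter.Tendsto (fun n : ℕ => (B n : ℝ) / n) Filter.atTop (nhds (2 / 3)) := by
  rw [hB.eq isBSeq_bSeq fun _ => one_le_bSeq]
  exact tendsto_bSeq_div
end

section
/- For every positive integer m: if m has a witness, then {n ≥ 1 : B(n) = m} = {m + R(m), m + R(m) + 1}; if m has no witness, then {n ≥ 1 : B(n) = m} = {m + R(m)}. -/
lemma two_a : ∀ i, 2 * a (i + 1) = 5 * 3 ^ i + 1 := by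
  intro i
  induction i with
  | zero => rfl
  | succ n ih =>
      show 2 * (3 * a (n + 1) - 1) = 5 * 3 ^ (n + 1) + 1
      have h3 : (3:ℕ) ^ (n+1) = 3 * 3 ^ n := pow_succ' 3 n
      omega
lemma a_succ_succ (n : ℕ) : a (n + 2) = 3 * a (n + 1) - 1 := rfl
lemma a_ge (i : ℕ) : i + 2 ≤ a (i + 1) := by
  have := two_a i
  have h3 : i + 1 ≤ 3 ^ i := by
    calc i + 1 ≤ 2 ^ i := Nat.succ_le_of_lt (Nat.lt_two_pow_self (n := i))
    _ ≤ 3 ^ i := Nat.pow_le_pow_left (by norm_num) i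
  omega
lemma a_ge' (i : ℕ) (hi : 1 ≤ i) : i + 1 ≤ a i := by
  obtain ⟨j, rfl⟩ := Nat.exists_eq_add_of_le' hi
  have := a_ge j
  omega
lemma a_three_le (i : ℕ) (hi : 1 ≤ i) : 3 ≤ a i := by
  obtain ⟨j, rfl⟩ := Nat.exists_eq_add_of_le' hi
  have := two_a j
  have : (1:ℕ) ≤ 3 ^ j := Nat.one_le_pow _ _ (by norm_num)
  omega
lemma a_strictmono (i j : ℕ) (hij : i < j) (hi : 1 ≤ i) : a i < a j := by
  obtain ⟨s, rfl⟩ := Nat.exists_eq_add_of_le' hi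
  obtain ⟨t, rfl⟩ := Nat.exists_eq_add_of_le' hij
  have h1 := two_a s
  have heq : t + (s + 1).succ = (t + s + 1) + 1 := by omega
  rw [heq]
  have h2 := two_a (t + s + 1)
  have : (3:ℕ) ^ s < 3 ^ (t + s + 1) := by
    apply Nat.pow_lt_pow_right (by norm_num); omega
  omega

/-- witness indicator -/
def W (m : ℕ) : ℕ :=
  ((Finset.Icc 1 m).filter (fun i => a i < m ∧ (m - a i) % 3 ^ i = 0)).card

lemma witness_unique (m i j : ℕ) (hi : 1 ≤ i) (hij : i < j)
    (h1 : a i < m) (h2 : (m - a i) % 3 ^ i = 0)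
    (h3 : a j < m) (h4 : (m - a j) % 3 ^ j = 0) : False := by
  have haij : a i < a j := a_strictmono i j hij hi
  have hd1 : (3:ℕ) ^ i ∣ m - a i := Nat.dvd_of_mod_eq_zero h2
  have hd2 : (3:ℕ) ^ j ∣ m - a j := Nat.dvd_of_mod_eq_zero h4
  have hd2' : (3:ℕ) ^ i ∣ m - a j := dvd_trans (pow_dvd_pow 3 (le_of_lt hij)) hd2
  have hdiff : (3:ℕ) ^ i ∣ a j - a i := by
    have : a j - a i = (m - a i) - (m - a j) := by omega
    rw [this]
    exact Nat.dvd_sub hd1 hd2'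
  have hdd : (3:ℕ) ^ i ∣ 2 * (a j - a i) := Dvd.dvd.mul_left hdiff 2
  -- 2*(a j - a i) = 5*3^(i-1)*(3^(j-i) - 1)
  obtain ⟨s, rfl⟩ := Nat.exists_eq_add_of_le' hi
  obtain ⟨t, rfl⟩ := Nat.exists_eq_add_of_le' hij
  have e1 := two_a s
  have heq : t + (s + 1).succ = (t + s + 1) + 1 := by omega
  rw [heq] at hdd h3 h4 hd2 hd2' hdiff haij
  have e2 := two_a (t + s + 1)
  have e3 : 2 * (a ((t+s+1)+1) - a (s+1)) = 5 * 3 ^ s * (3 ^ (t + 1) - 1) := by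
    have h5 : (3:ℕ) ^ (t+s+1) = 3 ^ s * 3 ^ (t+1) := by
      rw [← pow_add]; ring_nf
    have h6 : (1:ℕ) ≤ 3 ^ (t+1) := Nat.one_le_pow _ _ (by norm_num)
    rw [Nat.mul_sub]
    rw [e1, e2, h5]
    have : 5 * (3 ^ s * 3 ^ (t+1)) + 1 - (5 * 3 ^ s + 1) = 5 * 3 ^ s * 3 ^ (t+1) - 5 * 3 ^ s := by
      have : (5:ℕ) * 3 ^ s ≤ 5 * 3 ^ s * 3 ^ (t+1) := Nat.le_mul_of_pos_right _ (by positivity)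
      ring_nf
      ring_nf at this
      omega
    rw [this, Nat.mul_sub, Nat.mul_one]
  rw [e3] at hdd
  -- 3^(s+1) ∣ 5 * 3^s * (3^(t+1) - 1), but 3 ∤ 5*(3^(t+1)-1)
  have h7 : (3:ℕ) ^ (s+1) = 3 ^ s * 3 := pow_succ 3 s
  rw [h7] at hdd
  have h8 : (3:ℕ) ∣ 5 * (3 ^ (t+1) - 1) := by
    rcases hdd with ⟨c, hc⟩
    have h9 : 3 ^ s * (5 * (3 ^ (t+1) - 1)) = 3 ^ s * (3 * c) := by ring_nf; ring_nf at hc; omega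
    have h10 := Nat.eq_of_mul_eq_mul_left (Nat.pow_pos (n := s) (by norm_num) ) h9
    exact ⟨c, h10⟩
  have h11 : (3:ℕ) ∣ 3 ^ (t+1) := dvd_pow_self 3 (Nat.succ_ne_zero t)
  -- so 3 ∣ 5*(3^(t+1)-1) and 3 ∣ 3^(t+1) => 3 ∣ 5 => false
  have h12 : (3:ℕ) ∣ 5 * 3 ^ (t+1) - 5 * (3 ^ (t+1) - 1) := Nat.dvd_sub (h11.mul_left 5) h8
  have h13 : 5 * 3 ^ (t+1) - 5 * (3 ^ (t+1) - 1) = 5 := by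
    have h6' : (1:ℕ) ≤ 3 ^ (t+1) := Nat.one_le_pow _ _ (by norm_num)
    rw [Nat.mul_sub]
    omega
  rw [h13] at h12
  omega

lemma W_le_one (m : ℕ) : W m ≤ 1 := by
  rw [W]
  by_contra h
  push_neg at h
  obtain ⟨x, hx, y, hy, hxy⟩ := Finset.one_lt_card.mp h
  simp only [Finset.mem_filter, Finset.mem_Icc] at hx hy
  rcases Nat.lt_or_ge x y with h' | h'
  · exact witness_unique m x y hx.1.1 h' hx.2.1 hx.2.2 hy.2.1 hy.2.2
  · have h'' : y < x := lt_of_le_of_ne h' (by omega)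
    exact witness_unique m y x hy.1.1 h'' hy.2.1 hy.2.2 hx.2.1 hx.2.2

lemma W_eq_one_iff (m : ℕ) : W m = 1 ↔ HasWitness m := by
  constructor
  · intro h
    have : 0 < W m := by omega
    rw [W, Finset.card_pos] at this
    obtain ⟨i, hi⟩ := this.exists_mem
    simp only [Finset.mem_filter, Finset.mem_Icc] at hi
    refine ⟨(m - a i) / 3 ^ i, i, ?_, hi.1.1, ?_⟩
    · have hd : (3:ℕ) ^ i ∣ m - a i := Nat.dvd_of_mod_eq_zero hi.2.2
      have : 0 < m - a i := by omega
      have := Nat.le_of_dvd this hd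
      exact Nat.one_le_div_iff (Nat.pow_pos (n := i) (by norm_num)) |>.mpr this
    · have hd : (3:ℕ) ^ i ∣ m - a i := Nat.dvd_of_mod_eq_zero hi.2.2
      rw [Nat.div_mul_cancel hd]
      omega
  · rintro ⟨k, i, hk, hi, rfl⟩
    have h3i : i < 3 ^ i := Nat.lt_pow_self (n := i) (by norm_num)
    have ha3 := a_three_le i hi
    have h1 : a i < k * 3 ^ i + a i := by
      have : 0 < k * 3 ^ i := Nat.mul_pos hk (by positivity)
      omega
    have h2 : (k * 3 ^ i + a i - a i) % 3 ^ i = 0 := by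
      rw [Nat.add_sub_cancel, Nat.mul_mod_left]
    have hub : i ≤ k * 3 ^ i + a i := by
      have : 3 ^ i ≤ k * 3 ^ i := Nat.le_mul_of_pos_left _ hk
      omega
    have hcard : 0 < W (k * 3 ^ i + a i) := by
      rw [W, Finset.card_pos]
      exact ⟨i, Finset.mem_filter.mpr ⟨Finset.mem_Icc.mpr ⟨hi, hub⟩, h1, h2⟩⟩
    have := W_le_one (k * 3 ^ i + a i)
    omega

lemma W_eq_zero_iff (m : ℕ) : W m = 0 ↔ ¬ HasWitness m := by
  have h1 := W_le_one m
  have h2 := W_eq_one_iff m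
  constructor
  · intro h hw; rw [← h2] at hw; omega
  · intro h; by_contra h'; exact h (h2.mp (by omega))

lemma Rmi_eq_zero (m i : ℕ) (h : m ≤ i) : Rmi m i = 0 := by
  rw [Rmi]
  rcases Nat.eq_zero_or_pos i with rfl | hi
  · interval_cases m <;> rfl
  · have := a_ge' i hi
    have : m - a i = 0 := by omega
    rw [this]
    simp

lemma Rmi_eq_zero' (m i : ℕ) (h : m ≤ a i + 1) : Rmi m i = 0 := by
  rw [Rmi]
  have : m - a i - 1 = 0 := by omega
  rw [this]; simp

lemma R_eq_sum (m K : ℕ) (h : m ≤ K) : R m = ∑ i ∈ Finset.Icc 1 K, Rmi m i := by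
  rw [R]
  apply Finset.sum_subset
  · apply Finset.Icc_subset_Icc_right h
  · intro x hx hx'
    simp only [Finset.mem_Icc] at hx hx'
    exact Rmi_eq_zero m x (by omega)

lemma Rmi_succ_s11 (m i : ℕ) (hi : 1 ≤ i) :
    Rmi (m + 1) i = Rmi m i + (if a i < m ∧ (m - a i) % 3 ^ i = 0 then 1 else 0) := by
  rcases Nat.lt_or_ge (a i) m with h | h
  · have e1 : m + 1 - a i - 1 = (m - a i - 1) + 1 := by omega
    rw [Rmi, Rmi, e1, Nat.succ_div]
    have e2 : m - a i - 1 + 1 = m - a i := by omega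
    rw [e2]
    congr 1
    simp only [h, true_and]
    by_cases hd : (3:ℕ) ^ i ∣ m - a i
    · rw [if_pos hd, if_pos ((Nat.mod_eq_zero_of_dvd hd))]
    · rw [if_neg hd, if_neg (fun h' => hd (Nat.dvd_of_mod_eq_zero h'))]
  · have e0 : ¬ (a i < m ∧ (m - a i) % 3 ^ i = 0) := by omega
    rw [if_neg e0, Nat.add_zero, Rmi_eq_zero' m i (by omega), Rmi, ]
    have : m + 1 - a i - 1 = m - a i := by omega
    rw [this]
    have : m - a i = 0 ∨ (m - a i = 1 ∧ i = 0) ∨ (m - a i ≤ 1 ∧ 1 ≤ i) := by omega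
    have h3 : (2:ℕ) ≤ 3 ^ i := by
      calc (2:ℕ) ≤ 3 ^ 1 := by norm_num
      _ ≤ 3 ^ i := Nat.pow_le_pow_right (by norm_num) hi
    have : m - a i ≤ 1 := by omega
    exact Nat.div_eq_of_lt (by omega)

lemma R_succ (m : ℕ) : R (m + 1) = R m + W m := by
  rw [R_eq_sum (m+1) (m+1) le_rfl, R_eq_sum m (m+1) (by omega), W]
  rw [Finset.sum_congr rfl (fun i hi => Rmi_succ_s11 m i (Finset.mem_Icc.mp hi).1)]
  rw [Finset.sum_add_distrib]
  congr 1
  rw [Finset.card_filter]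
  symm
  apply Finset.sum_subset (Finset.Icc_subset_Icc_right (by omega))
  intro x hx hx'
  simp only [Finset.mem_Icc] at hx hx'
  have : m < x := by omega
  have hax := a_ge' x (by omega)
  rw [if_neg]
  omega

def ind (m i : ℕ) : ℕ := if a i < m ∧ (m - a i) % 3 ^ i = 0 then 1 else 0

lemma W_eq_sum (m K : ℕ) (h : m ≤ K) : W m = ∑ i ∈ Finset.Icc 1 K, ind m i := by
  rw [W, Finset.card_filter]
  apply Finset.sum_subset (Finset.Icc_subset_Icc_right h)
  intro x hx hx'
  simp only [Finset.mem_Icc] at hx hx'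
  have : m < x := by omega
  have hax := a_ge' x (by omega)
  rw [if_neg]
  omega

lemma sum_shift (h : ℕ → ℕ) (K : ℕ) (hK : 1 ≤ K) :
    ∑ i ∈ Finset.Icc 1 K, h i = h 1 + ∑ i ∈ Finset.Icc 1 (K - 1), h (i + 1) := by
  obtain ⟨L, rfl⟩ := Nat.exists_eq_add_of_le' hK
  rw [← Finset.Ico_add_one_right_eq_Icc, ← Finset.Ico_add_one_right_eq_Icc, Finset.sum_Ico_eq_sum_range,
    Finset.sum_Ico_eq_sum_range]
  have e1 : L + 1 + 1 - 1 = L + 1 := by omega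
  have e2 : L + 1 - 1 + 1 - 1 = L := by omega
  rw [e1, e2, Finset.sum_range_succ']
  have : ∀ i, h (1 + (i + 1)) = h (1 + i + 1) := by intro i; ring_nf
  rw [Finset.sum_congr rfl (fun i _ => this i)]
  simp only [Nat.add_zero]
  omega

lemma Rmi_shift (t r i : ℕ) (hi : 1 ≤ i) (hr : r ≤ 2) :
    Rmi (3 * t + r) (i + 1) = Rmi t i + ind t i := by
  obtain ⟨s, rfl⟩ := Nat.exists_eq_add_of_le' hi
  have hss : s + 1 + 1 = s + 2 := rfl
  rw [hss]
  have ha : a (s + 2) = 3 * a (s + 1) - 1 := a_succ_succ s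
  have ha3 := a_three_le (s + 1) (by omega)
  have h2 : (2:ℕ) < 3 ^ (s + 2) := by
    have : (3:ℕ)^2 ≤ 3 ^ (s+2) := Nat.pow_le_pow_right (by norm_num) (by omega)
    omega
  rcases Nat.lt_or_ge t (a (s + 1)) with h | h
  · -- both zero
    rw [Rmi, Nat.div_eq_of_lt (by omega)]
    rw [Rmi_eq_zero' t (s+1) (by omega)]
    simp only [ind]
    rw [if_neg (by omega)]
  · -- t ≥ a (s+1)
    have e1 : 3 * t + r - a (s + 2) - 1 = 3 * (t - a (s + 1)) + r := by omega
    rw [Rmi, e1]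
    have e2 : (3 * (t - a (s+1)) + r) / 3 ^ (s + 2) = (t - a (s+1)) / 3 ^ (s+1) := by
      rw [show s + 2 = (s+1)+1 from rfl, pow_succ' 3 (s+1), ← Nat.div_div_eq_div_mul,
        Nat.mul_add_div (by norm_num), Nat.div_eq_of_lt (show r < 3 by omega), Nat.add_zero]
    rw [e2]
    rcases Nat.eq_or_lt_of_le h with h' | h'
    · rw [← h', Nat.sub_self, Nat.zero_div, Rmi_eq_zero' _ (s+1) (by omega)]
      simp only [ind]
      rw [if_neg (by omega)]
    · have e3 : t - a (s+1) = (t - a (s+1) - 1) + 1 := by omega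
      rw [e3, Nat.succ_div, Rmi]
      simp only [ind]
      congr 1
      rw [← e3]
      by_cases hd : (3:ℕ) ^ (s+1) ∣ t - a (s+1)
      · rw [if_pos hd, if_pos ⟨h', Nat.mod_eq_zero_of_dvd hd⟩]
      · rw [if_neg hd, if_neg (fun hc => hd (Nat.dvd_of_mod_eq_zero hc.2))]

lemma R_rec (t r : ℕ) (ht : 2 ≤ t) (hr : r ≤ 2) :
    R (3 * t + r) = t - 2 + (if 1 ≤ r then 1 else 0) + R t + W t := by
  have hK : (1:ℕ) ≤ 3 * t + r := by omega
  rw [R_eq_sum (3*t+r) (3*t+r) le_rfl, sum_shift _ _ hK]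
  have e1 : Rmi (3*t+r) 1 = t - 2 + (if 1 ≤ r then 1 else 0) := by
    rw [Rmi]
    have ha1 : a 1 = 3 := rfl
    rw [ha1, pow_one]
    have : 3 * t + r - 3 - 1 = 3 * (t - 2) + (r + 2) := by omega
    rw [this, Nat.mul_add_div (by norm_num)]
    interval_cases r <;> simp
  rw [e1]
  rw [Finset.sum_congr rfl (fun i hi => Rmi_shift t r i (Finset.mem_Icc.mp hi).1 hr)]
  rw [Finset.sum_add_distrib, ← R_eq_sum t (3*t+r-1) (by omega), ← W_eq_sum t (3*t+r-1) (by omega)]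
  ring

lemma hw_mod3 (m : ℕ) (h : HasWitness m) : m % 3 = 0 ∨ m % 3 = 2 := by
  obtain ⟨k, i, hk, hi, rfl⟩ := h
  obtain ⟨s, rfl⟩ := Nat.exists_eq_add_of_le' hi
  rcases Nat.eq_zero_or_pos s with rfl | hs
  · left
    have : a (0+1) = 3 := rfl
    rw [this]
    omega
  · right
    obtain ⟨u, rfl⟩ := Nat.exists_eq_add_of_le' hs
    have ha : a (u + 2) = 3 * a (u + 1) - 1 := a_succ_succ u
    have ha3 := a_three_le (u + 1) (by omega)
    have h3 : (3:ℕ) ∣ 3 ^ (u + 1 + 1) := dvd_pow_self 3 (by omega)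
    obtain ⟨c, hc⟩ := h3
    have : u + 1 + 1 = u + 2 := rfl
    rw [this] at hc ⊢
    rw [ha, hc]
    have e : k * (3 * c) = 3 * (k * c) := by ring
    rw [e]
    omega

lemma hw_3t (t : ℕ) (ht : 2 ≤ t) : HasWitness (3 * t) := by
  refine ⟨t - 1, 1, by omega, le_rfl, ?_⟩
  have : a 1 = 3 := rfl
  rw [this]
  omega

lemma not_hw_3t1 (t : ℕ) : ¬ HasWitness (3 * t + 1) := by
  intro h
  have := hw_mod3 _ h
  omega

lemma hw_3t2_iff (t : ℕ) : HasWitness (3 * t + 2) ↔ HasWitness (t + 1) := by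
  constructor
  · rintro ⟨k, i, hk, hi, he⟩
    obtain ⟨s, rfl⟩ := Nat.exists_eq_add_of_le' hi
    rcases Nat.eq_zero_or_pos s with rfl | hs
    · exfalso
      have : a (0+1) = 3 := rfl
      rw [this] at he
      omega
    · obtain ⟨u, rfl⟩ := Nat.exists_eq_add_of_le' hs
      refine ⟨k, u + 1, hk, by omega, ?_⟩
      have ha : a (u + 2) = 3 * a (u + 1) - 1 := a_succ_succ u
      have ha3 := a_three_le (u + 1) (by omega)
      have hp : (3:ℕ) ^ (u + 1 + 1) = 3 * 3 ^ (u + 1) := pow_succ' 3 (u+1)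
      have : u + 1 + 1 = u + 2 := rfl
      rw [this] at he hp
      rw [ha, hp] at he
      have e : k * (3 * 3 ^ (u+1)) = 3 * (k * 3 ^ (u+1)) := by ring
      rw [e] at he
      omega
  · rintro ⟨k, i, hk, hi, he⟩
    obtain ⟨s, rfl⟩ := Nat.exists_eq_add_of_le' hi
    refine ⟨k, s + 2, hk, by omega, ?_⟩
    have ha : a (s + 2) = 3 * a (s + 1) - 1 := a_succ_succ s
    have ha3 := a_three_le (s + 1) (by omega)
    have hp : (3:ℕ) ^ (s + 2) = 3 * 3 ^ (s + 1) := pow_succ' 3 (s+1)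
    rw [ha, hp]
    have e : k * (3 * 3 ^ (s+1)) = 3 * (k * 3 ^ (s+1)) := by ring
    rw [e]
    omega

lemma W_3t (t : ℕ) (ht : 2 ≤ t) : W (3 * t) = 1 :=
  (W_eq_one_iff _).mpr (hw_3t t ht)
lemma W_3t1 (t : ℕ) : W (3 * t + 1) = 0 :=
  (W_eq_zero_iff _).mpr (not_hw_3t1 t)
lemma W_3t2 (t : ℕ) : W (3 * t + 2) = W (t + 1) := by
  rcases Nat.eq_zero_or_pos (W (t+1)) with h | h
  · rw [h, W_eq_zero_iff]
    rw [W_eq_zero_iff] at h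
    rw [hw_3t2_iff]
    exact h
  · have h1 : W (t+1) = 1 := by have := W_le_one (t+1); omega
    rw [h1, W_eq_one_iff, hw_3t2_iff, ← W_eq_one_iff, h1]

def N (m : ℕ) : ℕ := m + R m

lemma N_succ (m : ℕ) : N (m + 1) = N m + 1 + W m := by
  rw [N, N, R_succ]; ring

lemma N_le (m : ℕ) : m ≤ N m := Nat.le_add_right m (R m)

lemma N_mono : StrictMono N := by
  apply strictMono_nat_of_lt_succ
  intro n
  rw [N_succ]
  omega

def f (n : ℕ) : ℕ := Nat.findGreatest (fun m => N m ≤ n) n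

lemma N_one : N 1 = 1 := by decide

lemma f_spec (n : ℕ) (hn : 1 ≤ n) : N (f n) ≤ n ∧ n < N (f n + 1) ∧ 1 ≤ f n := by
  have h1 : 1 ≤ f n := Nat.le_findGreatest hn (by rw [N_one]; exact hn)
  have h2 : N (f n) ≤ n :=
    Nat.findGreatest_spec (P := fun m => N m ≤ n) hn (by show N 1 ≤ n; rw [N_one]; exact hn)
  refine ⟨h2, ?_, h1⟩
  rcases Nat.lt_or_ge n (f n + 1) with h | h
  · calc n < f n + 1 := h
    _ ≤ N (f n + 1) := N_le _
  · have h3 := Nat.findGreatest_is_greatest (P := fun m => N m ≤ n) (Nat.lt_succ_self (f n)) h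
    simp only [Nat.succ_eq_add_one] at h3
    omega

lemma f_eq (m n : ℕ) (h1 : N m ≤ n) (h2 : n < N (m + 1)) : f n = m := by
  have hmn : m ≤ n := le_trans (N_le m) h1
  rcases Nat.eq_zero_or_pos n with rfl | hn1
  · have h0 : m = 0 := by omega
    subst h0
    rfl
  have hle : m ≤ f n := Nat.le_findGreatest hmn h1
  obtain ⟨hs1, hs2, _⟩ := f_spec n hn1
  by_contra hne
  have : m + 1 ≤ f n := by omega
  have := N_mono.le_iff_le.mpr this
  omega

lemma f_block (q d : ℕ) (hd : d ≤ W q) : f (N q + d) = q := by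
  apply f_eq
  · omega
  · rw [N_succ]; omega

lemma f_val (m' x : ℕ) (h1 : N m' ≤ x) (h2 : x ≤ N m' + W m') : f x = m' := by
  apply f_eq _ _ h1
  rw [N_succ]
  omega

lemma N_pred (k : ℕ) (h : 1 ≤ k) : N k = N (k - 1) + 1 + W (k - 1) := by
  obtain ⟨j, rfl⟩ := Nat.exists_eq_add_of_le' h
  simp only [Nat.add_sub_cancel]
  exact N_succ j

set_option maxHeartbeats 2000000 in
lemma main_rec (n : ℕ) (hn : 10 ≤ n) :
    f n = f (n - f (n - 1)) + f (n - f (n - 2)) + f (n - f (n - 3)) := by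
  have hn1 : 1 ≤ n := by omega
  obtain ⟨hs1, hs2, hm1⟩ := f_spec n hn1
  have hm9 : 9 ≤ f n := by
    have hN9 : N 9 = 10 := by decide
    exact Nat.le_findGreatest (by omega) (by rw [hN9]; omega)
  generalize hmdef : f n = m at hs1 hs2 hm1 hm9 ⊢
  obtain ⟨q, r, hm3, hr3⟩ : ∃ q r, 3 * q + r = m ∧ r < 3 :=
    ⟨m / 3, m % 3, Nat.div_add_mod m 3, Nat.mod_lt _ (by norm_num)⟩
  have hq3 : 3 ≤ q := by omega
  have hR := R_rec q r (by omega) (by omega)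
  rw [hm3] at hR
  -- N relations
  have hN : N m = m + R m := rfl
  have hNq0 : N q = q + R q := rfl
  have hNq : N (q+1) = N q + 1 + W q := N_succ q
  have hNq2 : N (q+2) = N (q+1) + 1 + W (q+1) := N_succ (q+1)
  have hNqm : N q = N (q-1) + 1 + W (q-1) := N_pred q (by omega)
  have hNm1 : N m = N (m-1) + 1 + W (m-1) := N_pred m (by omega)
  have hNm2 : N (m-1) = N (m-1-1) + 1 + W (m-1-1) := N_pred (m-1) (by omega)
  have em2 : m - 1 - 1 = m - 2 := by omega
  rw [em2] at hNm2
  have hNm3 : N (m-2) = N (m-2-1) + 1 + W (m-2-1) := N_pred (m-2) (by omega)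
  have em3 : m - 2 - 1 = m - 3 := by omega
  rw [em3] at hNm3
  have hNmp : N (m+1) = N m + 1 + W m := N_succ m
  have hwq := W_le_one q
  have hwq1 := W_le_one (q+1)
  have hwqm := W_le_one (q-1)
  have hrc : r = 0 ∨ r = 1 ∨ r = 2 := by omega
  rcases hrc with hr | hr | hr
  all_goals subst hr
  -- case r = 0
  · norm_num at hR hm3
    have hWm : W m = 1 := by
      rw [← hm3]; exact W_3t q (by omega)
    have hW1 : W (m-1) = W q := by
      have e : m - 1 = 3*(q-1)+2 := by omega
      have e2 : q - 1 + 1 = q := by omega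
      rw [e, W_3t2, e2]
    have hW2 : W (m-2) = 0 := by
      have e : m - 2 = 3*(q-1)+1 := by omega
      rw [e]; exact W_3t1 (q-1)
    have hW3 : W (m-3) = 1 := by
      have e : m - 3 = 3*(q-1) := by omega
      rw [e]; exact W_3t (q-1) (by omega)
    have hpos : n = N m ∨ n = N m + 1 := by omega
    rcases hpos with hp | hp
    · -- pos = 0
      have v1 : f (n-1) = m-1 := f_val _ _ (by omega) (by omega)
      rcases Nat.eq_zero_or_pos (W q) with hwq0 | hwq0'
      · -- W q = 0
        have v2 : f (n-2) = m-2 := f_val _ _ (by omega) (by omega)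
        have v3 : f (n-3) = m-3 := f_val _ _ (by omega) (by omega)
        rw [v1, v2, v3]
        have x1 : f (n - (m-1)) = q-1 := f_val _ _ (by omega) (by omega)
        have x2 : f (n - (m-2)) = q := f_val _ _ (by omega) (by omega)
        have x3 : f (n - (m-3)) = q+1 := f_val _ _ (by omega) (by omega)
        rw [x1, x2, x3]
        omega
      · have hwq1' : W q = 1 := by omega
        have v2 : f (n-2) = m-1 := f_val _ _ (by omega) (by omega)
        have v3 : f (n-3) = m-2 := f_val _ _ (by omega) (by omega)
        rw [v1, v2, v3]
        have x1 : f (n - (m-1)) = q := f_val _ _ (by omega) (by omega)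
        have x2 : f (n - (m-2)) = q := f_val _ _ (by omega) (by omega)
        rw [x1, x2]
        omega
    · -- pos = 1
      have v1 : f (n-1) = m := f_val _ _ (by omega) (by omega)
      have v2 : f (n-2) = m-1 := f_val _ _ (by omega) (by omega)
      rcases Nat.eq_zero_or_pos (W q) with hwq0 | hwq0'
      · have v3 : f (n-3) = m-2 := f_val _ _ (by omega) (by omega)
        rw [v1, v2, v3]
        have x1 : f (n - m) = q-1 := f_val _ _ (by omega) (by omega)
        have x2 : f (n - (m-1)) = q := f_val _ _ (by omega) (by omega)
        have x3 : f (n - (m-2)) = q+1 := f_val _ _ (by omega) (by omega)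
        rw [x1, x2, x3]
        omega
      · have hwq1' : W q = 1 := by omega
        have v3 : f (n-3) = m-1 := f_val _ _ (by omega) (by omega)
        rw [v1, v2, v3]
        have x1 : f (n - m) = q := f_val _ _ (by omega) (by omega)
        have x2 : f (n - (m-1)) = q := f_val _ _ (by omega) (by omega)
        rw [x1, x2]
        omega
  -- case r = 1
  · norm_num at hR hm3
    have hWm : W m = 0 := by
      rw [← hm3]; exact W_3t1 q
    have hW1 : W (m-1) = 1 := by
      have e : m - 1 = 3*q := by omega
      rw [e]; exact W_3t q (by omega)
    have hW2 : W (m-2) = W q := by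
      have e : m - 2 = 3*(q-1)+2 := by omega
      have e2 : q - 1 + 1 = q := by omega
      rw [e, W_3t2, e2]
    have hp : n = N m := by omega
    have v1 : f (n-1) = m-1 := f_val _ _ (by omega) (by omega)
    have v2 : f (n-2) = m-1 := f_val _ _ (by omega) (by omega)
    have v3 : f (n-3) = m-2 := f_val _ _ (by omega) (by omega)
    rw [v1, v2, v3]
    have x1 : f (n - (m-1)) = q := f_val _ _ (by omega) (by omega)
    have x3 : f (n - (m-2)) = q+1 := f_val _ _ (by omega) (by omega)
    rw [x1, x3]
    omega
  -- case r = 2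
  · norm_num at hR hm3
    have hWm : W m = W (q+1) := by
      rw [← hm3]; exact W_3t2 q
    have hW1 : W (m-1) = 0 := by
      have e : m - 1 = 3*q+1 := by omega
      rw [e]; exact W_3t1 q
    have hW2 : W (m-2) = 1 := by
      have e : m - 2 = 3*q := by omega
      rw [e]; exact W_3t q (by omega)
    have hpos : n = N m ∨ (n = N m + 1 ∧ W (q+1) = 1) := by omega
    rcases hpos with hp | ⟨hp, hwq11⟩
    · have v1 : f (n-1) = m-1 := f_val _ _ (by omega) (by omega)
      have v2 : f (n-2) = m-2 := f_val _ _ (by omega) (by omega)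
      have v3 : f (n-3) = m-2 := f_val _ _ (by omega) (by omega)
      rw [v1, v2, v3]
      have x1 : f (n - (m-1)) = q := f_val _ _ (by omega) (by omega)
      have x2 : f (n - (m-2)) = q+1 := f_val _ _ (by omega) (by omega)
      rw [x1, x2]
      omega
    · have v1 : f (n-1) = m := f_val _ _ (by omega) (by omega)
      have v2 : f (n-2) = m-1 := f_val _ _ (by omega) (by omega)
      have v3 : f (n-3) = m-2 := f_val _ _ (by omega) (by omega)
      rw [v1, v2, v3]
      have x1 : f (n - m) = q := f_val _ _ (by omega) (by omega)
      have x2 : f (n - (m-1)) = q+1 := f_val _ _ (by omega) (by omega)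
      have x3 : f (n - (m-2)) = q+1 := f_val _ _ (by omega) (by omega)
      rw [x1, x2, x3]
      omega

lemma frec (n : ℕ) (hn : 6 ≤ n) :
    f n = f (n - f (n - 1)) + f (n - f (n - 2)) + f (n - f (n - 3)) := by
  rcases Nat.lt_or_ge n 10 with h | h
  · interval_cases n <;> decide
  · exact main_rec n h

lemma B_eq_f (B : ℕ → ℕ) (hB : IsBSeq B) : ∀ n, B n = f n := by
  intro n
  induction n using Nat.strong_induction_on with
  | _ n ih =>
    rcases Nat.lt_or_ge n 6 with h | h
    · interval_cases n
      · rw [hB.1]; decide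
      · rw [hB.2.1 1 (by norm_num) (by norm_num)]; decide
      · rw [hB.2.1 2 (by norm_num) (by norm_num)]; decide
      · rw [hB.2.1 3 (by norm_num) (by norm_num)]; decide
      · rw [hB.2.1 4 (by norm_num) (by norm_num)]; decide
      · rw [hB.2.1 5 (by norm_num) (by norm_num)]; decide
    · have e1 : B (n - 1) = f (n - 1) := ih (n - 1) (by omega)
      have e2 : B (n - 2) = f (n - 2) := ih (n - 2) (by omega)
      have e3 : B (n - 3) = f (n - 3) := ih (n - 3) (by omega)
      have hf1 : 1 ≤ f (n - 1) := (f_spec (n-1) (by omega)).2.2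
      have hf2 : 1 ≤ f (n - 2) := (f_spec (n-2) (by omega)).2.2
      have hf3 : 1 ≤ f (n - 3) := (f_spec (n-3) (by omega)).2.2
      rw [hB.2.2 n h, e1, e2, e3,
        ih (n - f (n - 1)) (by omega), ih (n - f (n - 2)) (by omega),
        ih (n - f (n - 3)) (by omega)]
      exact (frec n h).symm


/-- for every positive `m`: if `m` has a witness then
`{n ≥ 1 : B n = m} = {m + R m, m + R m + 1}`, and otherwise `{n ≥ 1 : B n = m} = {m + R m}`. -/
theorem stmt_11 (B : ℕ → ℕ) (hB : IsBSeq B) (m : ℕ) (hm : 1 ≤ m) :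
    (HasWitness m → {n : ℕ | 1 ≤ n ∧ B n = m} = {m + R m, m + R m + 1}) ∧
    (¬HasWitness m → {n : ℕ | 1 ≤ n ∧ B n = m} = {m + R m}) := by
  have hBf := B_eq_f B hB
  have hNm : N m = m + R m := rfl
  have hNs := N_succ m
  constructor
  · intro hw
    have hWm : W m = 1 := (W_eq_one_iff m).mpr hw
    ext n
    simp only [Set.mem_setOf_eq, Set.mem_insert_iff, Set.mem_singleton_iff]
    constructor
    · rintro ⟨hn1, hBn⟩
      rw [hBf n] at hBn
      obtain ⟨hs1, hs2, _⟩ := f_spec n hn1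
      rw [hBn] at hs1 hs2
      omega
    · rintro (rfl | rfl)
      · refine ⟨by omega, ?_⟩
        rw [hBf]
        exact f_val m (m + R m) (by omega) (by omega)
      · refine ⟨by omega, ?_⟩
        rw [hBf]
        exact f_val m (m + R m + 1) (by omega) (by omega)
  · intro hw
    have hWm : W m = 0 := (W_eq_zero_iff m).mpr hw
    ext n
    simp only [Set.mem_setOf_eq, Set.mem_singleton_iff]
    constructor
    · rintro ⟨hn1, hBn⟩
      rw [hBf n] at hBn
      obtain ⟨hs1, hs2, _⟩ := f_spec n hn1
      rw [hBn] at hs1 hs2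
      omega
    · rintro rfl
      refine ⟨by omega, ?_⟩
      rw [hBf]
      exact f_val m (m + R m) (by omega) (by omega)
end
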